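/- arXiv:1103.6077 — 3 statements merged into one kernel-verified Lean document; each statement's English description precedes it below -/
import Mathlib

section
/- Let u, α, β : ℝ² → ℝ be smooth functions of (x,t). Define the 4×4 real matrix-valued functions a₁ = [[0,e₁],[e₁,0]], a₂ = [[0,e₂],[e₂,0]], v₁ = [[ρ(α),0],[0,0]], v₂ = [[ρ(β),0],[0,0]], b = [[I₂,0],[0,R(u/2)]] (2×2 block notation), and let σ₁(X) = S X S with S = diag(1,1,1,−1). Then the two matrix equations ∂_t(b a₁ b⁻¹) − ∂_x(b a₂ b⁻¹) + [v₂, b a₁ b⁻¹] − [v₁, b a₂ b⁻¹] = 0 and ∂_t v₁ − ∂_x v₂ − [v₁, v₂] − [σ₁(b a₁ b⁻¹), b a₂ b⁻¹] + [σ₁(b a₂ b⁻¹), b a₁ b⁻¹] = 0 hold on ℝ² if and only if α = (1/2)∂_t u, β = (1/2)∂_x u, and u satisfies the sine-Gordon equation ∂_x² u − ∂_t² u = 4 sin u. -/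
/- STATEMENT 0: the 1-dimensional twisted O(2,2)/(O(2)×O(2))-system twisted by σ₁
   is the sine-Gordon equation (Example 3.1 / Ex:sin). -/

noncomputable section

open Matrix Real

/-- partial derivative in the first (x) variable -/
def px (f : ℝ → ℝ → ℝ) (x t : ℝ) : ℝ := deriv (fun s => f s t) x

/-- partial derivative in the second (t) variable -/
def pt (f : ℝ → ℝ → ℝ) (x t : ℝ) : ℝ := deriv (fun s => f x s) t

/-- entrywise partial derivative in x of a matrix-valued function -/
def pxM (f : ℝ → ℝ → Matrix (Fin 4) (Fin 4) ℝ) (x t : ℝ) : Matrix (Fin 4) (Fin 4) ℝ :=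
  Matrix.of fun i j => deriv (fun s => f s t i j) x

/-- entrywise partial derivative in t of a matrix-valued function -/
def ptM (f : ℝ → ℝ → Matrix (Fin 4) (Fin 4) ℝ) (x t : ℝ) : Matrix (Fin 4) (Fin 4) ℝ :=
  Matrix.of fun i j => deriv (fun s => f x s i j) t

/-- a₁ = [[0,e₁],[e₁,0]] -/
def a1 : Matrix (Fin 4) (Fin 4) ℝ := !![0,0,1,0; 0,0,0,0; 1,0,0,0; 0,0,0,0]

/-- a₂ = [[0,e₂],[e₂,0]] -/
def a2 : Matrix (Fin 4) (Fin 4) ℝ := !![0,0,0,0; 0,0,0,1; 0,0,0,0; 0,1,0,0]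

/-- S = diag(1,1,1,−1) -/
def S : Matrix (Fin 4) (Fin 4) ℝ := !![1,0,0,0; 0,1,0,0; 0,0,1,0; 0,0,0,-1]

/-- σ₁(X) = S X S -/
def sigma1 (X : Matrix (Fin 4) (Fin 4) ℝ) : Matrix (Fin 4) (Fin 4) ℝ := S * X * S

/-- v = [[ρ(s),0],[0,0]] with ρ(s) = [[0,−s],[s,0]] -/
def vmat (s : ℝ → ℝ → ℝ) (x t : ℝ) : Matrix (Fin 4) (Fin 4) ℝ :=
  !![0, -(s x t), 0, 0; s x t, 0, 0, 0; 0, 0, 0, 0; 0, 0, 0, 0]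

/-- b = [[I₂,0],[0,R(u/2)]] with R(θ) = [[cos θ, sin θ],[−sin θ, cos θ]] -/
def bmat (u : ℝ → ℝ → ℝ) (x t : ℝ) : Matrix (Fin 4) (Fin 4) ℝ :=
  !![1,0,0,0;
     0,1,0,0;
     0,0, Real.cos (u x t / 2), Real.sin (u x t / 2);
     0,0, -Real.sin (u x t / 2), Real.cos (u x t / 2)]


set_option maxHeartbeats 1600000 in
lemma _dummy_heartbeat_marker : True := trivial

def binv (u : ℝ → ℝ → ℝ) (x t : ℝ) : Matrix (Fin 4) (Fin 4) ℝ :=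
  !![1,0,0,0;
     0,1,0,0;
     0,0, Real.cos (u x t / 2), -Real.sin (u x t / 2);
     0,0, Real.sin (u x t / 2), Real.cos (u x t / 2)]

def A1m (u : ℝ → ℝ → ℝ) (x t : ℝ) : Matrix (Fin 4) (Fin 4) ℝ :=
  !![0,0, Real.cos (u x t / 2), -Real.sin (u x t / 2);
     0,0,0,0;
     Real.cos (u x t / 2),0,0,0;
     -Real.sin (u x t / 2),0,0,0]

def A2m (u : ℝ → ℝ → ℝ) (x t : ℝ) : Matrix (Fin 4) (Fin 4) ℝ :=
  !![0,0,0,0;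
     0,0, Real.sin (u x t / 2), Real.cos (u x t / 2);
     0, Real.sin (u x t / 2),0,0;
     0, Real.cos (u x t / 2),0,0]

lemma bmat_inv (u : ℝ → ℝ → ℝ) (x t : ℝ) : (bmat u x t)⁻¹ = binv u x t := by
  apply Matrix.inv_eq_right_inv
  ext i j
  fin_cases i <;> fin_cases j <;>
    simp [bmat, binv, Matrix.mul_apply, Fin.sum_univ_four, Matrix.one_apply,
      Matrix.vecHead, Matrix.vecTail] <;>
    nlinarith [Real.sin_sq_add_cos_sq (u x t / 2)]

lemma conj_a1 (u : ℝ → ℝ → ℝ) (x t : ℝ) :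
    bmat u x t * a1 * (bmat u x t)⁻¹ = A1m u x t := by
  rw [bmat_inv]
  ext i j
  fin_cases i <;> fin_cases j <;>
    simp [bmat, binv, a1, A1m, Matrix.mul_apply, Fin.sum_univ_four, Matrix.vecHead, Matrix.vecTail]

lemma conj_a2 (u : ℝ → ℝ → ℝ) (x t : ℝ) :
    bmat u x t * a2 * (bmat u x t)⁻¹ = A2m u x t := by
  rw [bmat_inv]
  ext i j
  fin_cases i <;> fin_cases j <;>
    simp [bmat, binv, a2, A2m, Matrix.mul_apply, Fin.sum_univ_four, Matrix.vecHead, Matrix.vecTail]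

lemma sigma1_A1 (u : ℝ → ℝ → ℝ) (x t : ℝ) :
    sigma1 (A1m u x t) =
    !![0,0, Real.cos (u x t / 2), Real.sin (u x t / 2);
       0,0,0,0;
       Real.cos (u x t / 2),0,0,0;
       Real.sin (u x t / 2),0,0,0] := by
  ext i j
  fin_cases i <;> fin_cases j <;>
    simp [sigma1, S, A1m, Matrix.mul_apply, Fin.sum_univ_four, Matrix.vecHead, Matrix.vecTail]

lemma sigma1_A2 (u : ℝ → ℝ → ℝ) (x t : ℝ) :
    sigma1 (A2m u x t) =
    !![0,0,0,0;
       0,0, Real.sin (u x t / 2), -Real.cos (u x t / 2);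
       0, Real.sin (u x t / 2),0,0;
       0, -Real.cos (u x t / 2),0,0] := by
  ext i j
  fin_cases i <;> fin_cases j <;>
    simp [sigma1, S, A2m, Matrix.mul_apply, Fin.sum_univ_four, Matrix.vecHead, Matrix.vecTail]

lemma hasDerivAt_pt (u : ℝ → ℝ → ℝ) (hu : ContDiff ℝ (⊤ : ℕ∞) (Function.uncurry u)) (x t : ℝ) :
    HasDerivAt (fun s => u x s) (pt u x t) t := by
  have hD : Differentiable ℝ (Function.uncurry u) := hu.differentiable (by simp)
  have hd : DifferentiableAt ℝ (fun s => u x s) t :=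
    ((hD.comp ((differentiable_const x).prodMk differentiable_id)).differentiableAt)
  exact hd.hasDerivAt

lemma hasDerivAt_px (u : ℝ → ℝ → ℝ) (hu : ContDiff ℝ (⊤ : ℕ∞) (Function.uncurry u)) (x t : ℝ) :
    HasDerivAt (fun s => u s t) (px u x t) x := by
  have hD : Differentiable ℝ (Function.uncurry u) := hu.differentiable (by simp)
  have hd : DifferentiableAt ℝ (fun s => u s t) x :=
    ((hD.comp (differentiable_id.prodMk (differentiable_const t))).differentiableAt)
  exact hd.hasDerivAt

lemma deriv_cos_t (u : ℝ → ℝ → ℝ) (hu : ContDiff ℝ (⊤ : ℕ∞) (Function.uncurry u)) (x t : ℝ) :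
    deriv (fun s => Real.cos (u x s / 2)) t = -Real.sin (u x t / 2) * (pt u x t / 2) :=
  (((hasDerivAt_pt u hu x t).div_const 2).cos).deriv

lemma deriv_sin_t (u : ℝ → ℝ → ℝ) (hu : ContDiff ℝ (⊤ : ℕ∞) (Function.uncurry u)) (x t : ℝ) :
    deriv (fun s => Real.sin (u x s / 2)) t = Real.cos (u x t / 2) * (pt u x t / 2) :=
  (((hasDerivAt_pt u hu x t).div_const 2).sin).deriv

lemma deriv_cos_x (u : ℝ → ℝ → ℝ) (hu : ContDiff ℝ (⊤ : ℕ∞) (Function.uncurry u)) (x t : ℝ) :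
    deriv (fun s => Real.cos (u s t / 2)) x = -Real.sin (u x t / 2) * (px u x t / 2) :=
  (((hasDerivAt_px u hu x t).div_const 2).cos).deriv

lemma deriv_sin_x (u : ℝ → ℝ → ℝ) (hu : ContDiff ℝ (⊤ : ℕ∞) (Function.uncurry u)) (x t : ℝ) :
    deriv (fun s => Real.sin (u s t / 2)) x = Real.cos (u x t / 2) * (px u x t / 2) :=
  (((hasDerivAt_px u hu x t).div_const 2).sin).deriv

lemma ptM_A1 (u : ℝ → ℝ → ℝ) (hu : ContDiff ℝ (⊤ : ℕ∞) (Function.uncurry u)) (x t : ℝ) :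
    ptM (A1m u) x t =
    !![0,0, -Real.sin (u x t / 2) * (pt u x t / 2), -(Real.cos (u x t / 2) * (pt u x t / 2));
       0,0,0,0;
       -Real.sin (u x t / 2) * (pt u x t / 2),0,0,0;
       -(Real.cos (u x t / 2) * (pt u x t / 2)),0,0,0] := by
  ext i j
  fin_cases i <;> fin_cases j <;>
    simp [ptM, A1m, deriv_cos_t u hu, deriv_sin_t u hu, Matrix.vecHead, Matrix.vecTail]

lemma pxM_A2 (u : ℝ → ℝ → ℝ) (hu : ContDiff ℝ (⊤ : ℕ∞) (Function.uncurry u)) (x t : ℝ) :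
    pxM (A2m u) x t =
    !![0,0,0,0;
       0,0, Real.cos (u x t / 2) * (px u x t / 2), -Real.sin (u x t / 2) * (px u x t / 2);
       0, Real.cos (u x t / 2) * (px u x t / 2),0,0;
       0, -Real.sin (u x t / 2) * (px u x t / 2),0,0] := by
  ext i j
  fin_cases i <;> fin_cases j <;>
    simp [pxM, A2m, deriv_cos_x u hu, deriv_sin_x u hu, Matrix.vecHead, Matrix.vecTail]

lemma ptM_vmat (α : ℝ → ℝ → ℝ) (x t : ℝ) :
    ptM (vmat α) x t = !![0, -(pt α x t), 0, 0; pt α x t, 0,0,0; 0,0,0,0; 0,0,0,0] := by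
  ext i j
  fin_cases i <;> fin_cases j <;> simp [ptM, vmat, pt, Matrix.vecHead, Matrix.vecTail]

lemma pxM_vmat (β : ℝ → ℝ → ℝ) (x t : ℝ) :
    pxM (vmat β) x t = !![0, -(px β x t), 0, 0; px β x t, 0,0,0; 0,0,0,0; 0,0,0,0] := by
  ext i j
  fin_cases i <;> fin_cases j <;> simp [pxM, vmat, px, Matrix.vecHead, Matrix.vecTail]

set_option maxHeartbeats 1600000 in
lemma comb1 (u α β : ℝ → ℝ → ℝ) (hu : ContDiff ℝ (⊤ : ℕ∞) (Function.uncurry u)) (x t : ℝ) :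
    ptM (A1m u) x t - pxM (A2m u) x t
      + (vmat β x t * A1m u x t - A1m u x t * vmat β x t)
      - (vmat α x t * A2m u x t - A2m u x t * vmat α x t) =
    !![0,0, Real.sin (u x t / 2) * (α x t - pt u x t / 2), Real.cos (u x t / 2) * (α x t - pt u x t / 2);
       0,0, Real.cos (u x t / 2) * (β x t - px u x t / 2), -(Real.sin (u x t / 2) * (β x t - px u x t / 2));
       Real.sin (u x t / 2) * (α x t - pt u x t / 2), Real.cos (u x t / 2) * (β x t - px u x t / 2), 0, 0;
       Real.cos (u x t / 2) * (α x t - pt u x t / 2), -(Real.sin (u x t / 2) * (β x t - px u x t / 2)), 0, 0] := by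
  rw [ptM_A1 u hu, pxM_A2 u hu]
  ext i j
  fin_cases i <;> fin_cases j <;>
    simp [vmat, A1m, A2m, Matrix.mul_apply, Fin.sum_univ_four, Matrix.vecHead, Matrix.vecTail] <;>
    ring

set_option maxHeartbeats 1600000 in
lemma comb2 (u α β : ℝ → ℝ → ℝ) (x t : ℝ) :
    ptM (vmat α) x t - pxM (vmat β) x t
      - (vmat α x t * vmat β x t - vmat β x t * vmat α x t)
      - (sigma1 (A1m u x t) * A2m u x t - A2m u x t * sigma1 (A1m u x t))
      + (sigma1 (A2m u x t) * A1m u x t - A1m u x t * sigma1 (A2m u x t)) =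
    !![0, -(pt α x t - px β x t + 4 * (Real.sin (u x t / 2) * Real.cos (u x t / 2))), 0, 0;
       pt α x t - px β x t + 4 * (Real.sin (u x t / 2) * Real.cos (u x t / 2)), 0, 0, 0;
       0, 0, 0, 0; 0, 0, 0, 0] := by
  rw [ptM_vmat, pxM_vmat, sigma1_A1, sigma1_A2]
  ext i j
  fin_cases i <;> fin_cases j <;>
    simp [vmat, A1m, A2m, Matrix.mul_apply, Fin.sum_univ_four, Matrix.vecHead, Matrix.vecTail] <;>
    ring

set_option maxHeartbeats 1600000 in
lemma eq1_iff (u α β : ℝ → ℝ → ℝ) (hu : ContDiff ℝ (⊤ : ℕ∞) (Function.uncurry u)) (x t : ℝ) :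
    (ptM (A1m u) x t - pxM (A2m u) x t
      + (vmat β x t * A1m u x t - A1m u x t * vmat β x t)
      - (vmat α x t * A2m u x t - A2m u x t * vmat α x t) = 0)
    ↔ (α x t = (1/2) * pt u x t ∧ β x t = (1/2) * px u x t) := by
  rw [comb1 u α β hu x t]
  have pyth := Real.sin_sq_add_cos_sq (u x t / 2)
  constructor
  · intro hm
    have h := Matrix.ext_iff.mpr hm
    have h02 := h 0 2
    have h03 := h 0 3
    have h12 := h 1 2
    have h13 := h 1 3
    simp [Matrix.vecHead, Matrix.vecTail] at h02 h03 h12 h13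
    constructor
    · rcases h02 with h02 | h02
      · rcases h03 with h03 | h03
        · exfalso; rw [h02, h03] at pyth; norm_num at pyth
        · linarith
      · linarith
    · rcases h12 with h12 | h12
      · rcases h13 with h13 | h13
        · exfalso; rw [h13, h12] at pyth; norm_num at pyth
        · linarith
      · linarith
  · rintro ⟨ha, hb⟩
    ext i j
    fin_cases i <;> fin_cases j <;>
      simp [Matrix.vecHead, Matrix.vecTail, ha, hb] <;> first | ring1 | tauto | (right; ring1) | (left; ring1)

set_option maxHeartbeats 1600000 in
lemma eq2_iff (u α β : ℝ → ℝ → ℝ) (x t : ℝ) :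
    (ptM (vmat α) x t - pxM (vmat β) x t
      - (vmat α x t * vmat β x t - vmat β x t * vmat α x t)
      - (sigma1 (A1m u x t) * A2m u x t - A2m u x t * sigma1 (A1m u x t))
      + (sigma1 (A2m u x t) * A1m u x t - A1m u x t * sigma1 (A2m u x t)) = 0)
    ↔ (pt α x t - px β x t + 2 * Real.sin (u x t) = 0) := by
  rw [comb2 u α β x t]
  have hs : Real.sin (u x t) = 2 * (Real.sin (u x t / 2) * Real.cos (u x t / 2)) := by
    have h2 := Real.sin_two_mul (u x t / 2)
    rw [show 2 * (u x t / 2) = u x t by ring] at h2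
    linarith [h2]
  constructor
  · intro hm
    have h01 := Matrix.ext_iff.mpr hm 0 1
    simp [Matrix.vecHead, Matrix.vecTail] at h01
    linarith [h01, hs]
  · intro hc
    ext i j
    fin_cases i <;> fin_cases j <;> simp [Matrix.vecHead, Matrix.vecTail] <;> linarith [hc, hs]

theorem sineGordon_equivalence (u α β : ℝ → ℝ → ℝ)
    (hu : ContDiff ℝ (⊤ : ℕ∞) (Function.uncurry u))
    (hα : ContDiff ℝ (⊤ : ℕ∞) (Function.uncurry α))
    (hβ : ContDiff ℝ (⊤ : ℕ∞) (Function.uncurry β)) :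
    (∀ x t : ℝ,
      ptM (fun x t => bmat u x t * a1 * (bmat u x t)⁻¹) x t
        - pxM (fun x t => bmat u x t * a2 * (bmat u x t)⁻¹) x t
        + (vmat β x t * (bmat u x t * a1 * (bmat u x t)⁻¹)
            - (bmat u x t * a1 * (bmat u x t)⁻¹) * vmat β x t)
        - (vmat α x t * (bmat u x t * a2 * (bmat u x t)⁻¹)
            - (bmat u x t * a2 * (bmat u x t)⁻¹) * vmat α x t) = 0
      ∧ ptM (vmat α) x t - pxM (vmat β) x t
        - (vmat α x t * vmat β x t - vmat β x t * vmat α x t)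
        - (sigma1 (bmat u x t * a1 * (bmat u x t)⁻¹) * (bmat u x t * a2 * (bmat u x t)⁻¹)
            - (bmat u x t * a2 * (bmat u x t)⁻¹) * sigma1 (bmat u x t * a1 * (bmat u x t)⁻¹))
        + (sigma1 (bmat u x t * a2 * (bmat u x t)⁻¹) * (bmat u x t * a1 * (bmat u x t)⁻¹)
            - (bmat u x t * a1 * (bmat u x t)⁻¹) * sigma1 (bmat u x t * a2 * (bmat u x t)⁻¹)) = 0)
    ↔ (∀ x t : ℝ,
      α x t = (1/2) * pt u x t ∧ β x t = (1/2) * px u x t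
      ∧ px (px u) x t - pt (pt u) x t = 4 * Real.sin (u x t)) := by
  have hA1f : (fun x t => bmat u x t * a1 * (bmat u x t)⁻¹) = A1m u :=
    funext fun x => funext fun t => conj_a1 u x t
  have hA2f : (fun x t => bmat u x t * a2 * (bmat u x t)⁻¹) = A2m u :=
    funext fun x => funext fun t => conj_a2 u x t
  have hptα : (∀ x t, α x t = (1/2) * pt u x t) → ∀ x t, pt α x t = (1/2) * pt (pt u) x t := by
    intro hα x t
    show deriv (fun s => α x s) t = _
    rw [show (fun s => α x s) = fun s => (1/2 : ℝ) * pt u x s from funext fun s => hα x s]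
    rw [deriv_const_mul_field]
    rfl
  have hpxβ : (∀ x t, β x t = (1/2) * px u x t) → ∀ x t, px β x t = (1/2) * px (px u) x t := by
    intro hβ x t
    show deriv (fun s => β s t) x = _
    rw [show (fun s => β s t) = fun s => (1/2 : ℝ) * px u s t from funext fun s => hβ s t]
    rw [deriv_const_mul_field]
    rfl
  constructor
  · intro h x t
    have hα : ∀ x t, α x t = (1/2) * pt u x t := by
      intro x' t'
      have h1 := (h x' t').1
      rw [hA1f, hA2f, conj_a1, conj_a2] at h1
      exact ((eq1_iff u α β hu x' t').mp h1).1
    have hβ : ∀ x t, β x t = (1/2) * px u x t := by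
      intro x' t'
      have h1 := (h x' t').1
      rw [hA1f, hA2f, conj_a1, conj_a2] at h1
      exact ((eq1_iff u α β hu x' t').mp h1).2
    refine ⟨hα x t, hβ x t, ?_⟩
    have h2 := (h x t).2
    rw [conj_a1, conj_a2] at h2
    have hE := (eq2_iff u α β x t).mp h2
    have e1 := hptα hα x t
    have e2 := hpxβ hβ x t
    linarith [hE, e1, e2]
  · intro h x t
    have hα : ∀ x t, α x t = (1/2) * pt u x t := fun x t => (h x t).1
    have hβ : ∀ x t, β x t = (1/2) * px u x t := fun x t => (h x t).2.1
    refine ⟨?_, ?_⟩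
    · rw [hA1f, hA2f, conj_a1, conj_a2]
      exact (eq1_iff u α β hu x t).mpr ⟨hα x t, hβ x t⟩
    · rw [conj_a1, conj_a2]
      refine (eq2_iff u α β x t).mpr ?_
      have e1 := hptα hα x t
      have e2 := hpxβ hβ x t
      linarith [(h x t).2.2, e1, e2]


end
end

section
/- Let n ≥ 1, U ⊆ ℝⁿ open, and (ε₁,…,ε_n) = (−1,1,…,1). Let A = (a^k_i) : U → M(n,ℝ) be differentiable with Σ_{j=1}^n ε_j (a^k_j)² = ε_k at every point, for every k. Let f_{ij} : U → ℝ be functions, and suppose ∂_{x_j} a^k_i = a^k_j f_{ij} holds for all k and all i ≠ j. Then for every i and k: a^k_i ∂_{x_i} a^k_i = −ε_i Σ_{j≠i} ε_j a^k_j a^k_i f_{ji}; in particular, at every point where a^k_i ≠ 0, ∂_{x_i} a^k_i = −ε_i Σ_{j≠i} ε_j a^k_j f_{ji}. -/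
/-! Differentiating the constant `∑ j, ε_j (a^k_j)²` in the direction `x_i` gives
`∑ j, ε_j a^k_j ∂_i a^k_j = 0`. The hypothesis turns every term with `j ≠ i` into
`ε_j a^k_j a^k_i f_{ji}`, and multiplying by `ε_i` (with `ε_i² = 1`) isolates `a^k_i ∂_i a^k_i`. -/

noncomputable section

open Matrix

variable {n : ℕ}

/-- partial derivative ∂_{x_j} of a scalar function on ℝⁿ -/
def pd (j : Fin n) (f : (Fin n → ℝ) → ℝ) (x : Fin n → ℝ) : ℝ :=
  fderiv ℝ f x (Pi.single j 1)

/-- ε = (−1,1,…,1) -/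
def eps {n : ℕ} (k : Fin n) : ℝ := if (k : ℕ) = 0 then -1 else 1

theorem eps_mul_self (k : Fin n) : eps k * eps k = 1 := by
  unfold eps
  split_ifs <;> norm_num

open Filter Topology in
theorem sum_mul_fderiv_eq_zero_of_eventually_sum_sq_eq {ι E : Type*} [Fintype ι]
    [NormedAddCommGroup E] [NormedSpace ℝ E] {a : ι → E → ℝ} {c : ι → ℝ} {x : E} {C : ℝ}
    (ha : ∀ j, DifferentiableAt ℝ (a j) x) (hC : ∀ᶠ y in 𝓝 x, ∑ j, c j * a j y ^ 2 = C)
    (v : E) : ∑ j, c j * a j x * fderiv ℝ (a j) x v = 0 := by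
  have hsum : HasFDerivAt (fun y => ∑ j, c j * a j y ^ 2)
      (∑ j, c j • (2 • a j x ^ (2 - 1)) • fderiv ℝ (a j) x) x :=
    HasFDerivAt.fun_sum fun j _ => ((ha j).hasFDerivAt.pow 2).const_mul (c j)
  have hzero : (∑ j, c j • (2 • a j x ^ (2 - 1)) • fderiv ℝ (a j) x) = 0 :=
    hsum.unique ((hasFDerivAt_const C x).congr_of_eventuallyEq hC)
  have := congrArg (fun L => L v / 2) hzero
  simpa [Finset.sum_div, mul_assoc, mul_left_comm _ (2 : ℝ)] using this

theorem diagonal_derivatives_general (U : Set (Fin n → ℝ)) (hU : IsOpen U)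
    (A : (Fin n → ℝ) → Matrix (Fin n) (Fin n) ℝ)
    (hAdiff : ∀ x ∈ U, ∀ k i : Fin n, DifferentiableAt ℝ (fun y => A y k i) x)
    (hAorth : ∀ x ∈ U, ∀ k : Fin n, ∑ j : Fin n, eps j * (A x k j)^2 = eps k)
    (f : Fin n → Fin n → (Fin n → ℝ) → ℝ)
    (hoff : ∀ x ∈ U, ∀ k i j : Fin n, i ≠ j →
      pd j (fun y => A y k i) x = A x k j * f i j x) :
    ∀ x ∈ U, ∀ i k : Fin n,
      (A x k i * pd i (fun y => A y k i) x
        = -eps i * ∑ j ∈ Finset.univ.filter (fun j : Fin n => j ≠ i),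
            eps j * A x k j * A x k i * f j i x)
      ∧ (A x k i ≠ 0 →
          pd i (fun y => A y k i) x
            = -eps i * ∑ j ∈ Finset.univ.filter (fun j : Fin n => j ≠ i),
                eps j * A x k j * f j i x) := by
  intro x hx i k
  have hcrit : ∑ j, eps j * A x k j * pd i (fun y => A y k j) x = 0 :=
    sum_mul_fderiv_eq_zero_of_eventually_sum_sq_eq (hAdiff x hx k)
      (Filter.mem_of_superset (hU.mem_nhds hx) fun y hy => hAorth y hy k) _
  have hoffdiag : ∑ j ∈ Finset.univ.filter (· ≠ i), eps j * A x k j * pd i (fun y => A y k j) x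
      = ∑ j ∈ Finset.univ.filter (· ≠ i), eps j * A x k j * A x k i * f j i x :=
    Finset.sum_congr rfl fun j hj => by rw [hoff x hx k j i (Finset.mem_filter.1 hj).2]; ring
  rw [← Finset.add_sum_erase _ _ (Finset.mem_univ i), ← Finset.filter_ne', hoffdiag] at hcrit
  have key : A x k i * pd i (fun y => A y k i) x
      = -eps i * ∑ j ∈ Finset.univ.filter (· ≠ i), eps j * A x k j * A x k i * f j i x := by
    linear_combination eps i * hcrit - A x k i * pd i (fun y => A y k i) x * eps_mul_self i
  refine ⟨key, fun hA => mul_left_cancel₀ hA ?_⟩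
  simp only [key, Finset.mul_sum]
  exact Finset.sum_congr rfl fun j _ => by ring

theorem diagonal_derivatives (hn : 0 < n) (U : Set (Fin n → ℝ)) (hU : IsOpen U)
    (A : (Fin n → ℝ) → Matrix (Fin n) (Fin n) ℝ)
    (hAdiff : ∀ x ∈ U, ∀ k i : Fin n, DifferentiableAt ℝ (fun y => A y k i) x)
    (hAorth : ∀ x ∈ U, ∀ k : Fin n, ∑ j : Fin n, eps j * (A x k j)^2 = eps k)
    (f : Fin n → Fin n → (Fin n → ℝ) → ℝ)
    (hoff : ∀ x ∈ U, ∀ k i j : Fin n, i ≠ j →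
      pd j (fun y => A y k i) x = A x k j * f i j x) :
    ∀ x ∈ U, ∀ i k : Fin n,
      (A x k i * pd i (fun y => A y k i) x
        = -eps i * ∑ j ∈ Finset.univ.filter (fun j : Fin n => j ≠ i),
            eps j * A x k j * A x k i * f j i x)
      ∧ (A x k i ≠ 0 →
          pd i (fun y => A y k i) x
            = -eps i * ∑ j ∈ Finset.univ.filter (fun j : Fin n => j ≠ i),
                eps j * A x k j * f j i x) :=
  diagonal_derivatives_general U hU A hAdiff hAorth f hoff

end
end

section
/- Let n ≥ 1 and let Σ ⊆ ℂ∖{0} satisfy −Σ = Σ. Let D = diag(I_n, −I_n) and σ₀(X) = D X D. Let a, ā ∈ M(2n,ℂ) be constant matrices with D a D = −a and D ā D = −ā, and set E(x,λ) = exp(x(λ a + λ⁻¹ ā)). Suppose m₊, m₋ : ℝ × Σ → GL(2n,ℂ) and V : Σ → M(2n,ℂ) satisfy, for all x ∈ ℝ and λ ∈ Σ: m₊(x,λ) = m₋(x,λ) E(x,λ)⁻¹ V(λ) E(x,λ), σ₀(m₊(x,−λ)) = m₋(x,λ), and σ₀(m₋(x,−λ)) = m₊(x,λ). Then σ₀(V(−λ))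 V(λ) = I for all λ ∈ Σ. -/
/-!
The conclusion does not involve `x`, so it suffices to look at `x = 0`, where `E = I` and the
jump relation reads `m₊ = m₋ V`. Since `σ₀` is conjugation by the involution `D`, it is
multiplicative; applying it to the jump relation at `-λ` and using the two symmetries gives
`m₋(λ) = m₊(λ) σ₀(V(-λ))`. Hence `m₊(λ) = m₊(λ) σ₀(V(-λ)) V(λ)`, and `m₊(λ)` is invertible.
-/

noncomputable section

open Matrix

/-- D = diag(I_n, −I_n) on Fin n ⊕ Fin n -/
def Dmat (n : ℕ) : Matrix (Fin n ⊕ Fin n) (Fin n ⊕ Fin n) ℂ :=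
  Matrix.diagonal (Sum.elim (fun _ => (1 : ℂ)) (fun _ => -1))

/-- σ₀(X) = D X D -/
def sigma0 {n : ℕ} (X : Matrix (Fin n ⊕ Fin n) (Fin n ⊕ Fin n) ℂ) :
    Matrix (Fin n ⊕ Fin n) (Fin n ⊕ Fin n) ℂ :=
  Dmat n * X * Dmat n

/-- E(x,λ) = exp(x(λ a + λ⁻¹ ā)) -/
def Emat {n : ℕ} (a abar : Matrix (Fin n ⊕ Fin n) (Fin n ⊕ Fin n) ℂ) (x : ℝ) (lam : ℂ) :
    Matrix (Fin n ⊕ Fin n) (Fin n ⊕ Fin n) ℂ :=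
  NormedSpace.exp ((x : ℂ) • (lam • a + lam⁻¹ • abar))

theorem Dmat_mul_self (n : ℕ) : Dmat n * Dmat n = 1 := by
  rw [Dmat, diagonal_mul_diagonal, ← diagonal_one]
  congr 1
  ext (i | i) <;> simp

theorem sigma0_mul {n : ℕ} (X Y : Matrix (Fin n ⊕ Fin n) (Fin n ⊕ Fin n) ℂ) :
    sigma0 (X * Y) = sigma0 X * sigma0 Y :=
  calc Dmat n * (X * Y) * Dmat n
      = Dmat n * X * (Dmat n * Dmat n) * Y * Dmat n := by rw [Dmat_mul_self]; noncomm_ring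
    _ = sigma0 X * sigma0 Y := by simp only [sigma0]; noncomm_ring

@[simp]
theorem Emat_zero {n : ℕ} (a abar : Matrix (Fin n ⊕ Fin n) (Fin n ⊕ Fin n) ℂ) (lam : ℂ) :
    Emat a abar 0 lam = 1 := by
  simp [Emat, NormedSpace.exp_zero]

theorem mul_eq_one_of_eq_mul_of_eq_mul {M : Type*} [Monoid M] {p m v w : M} (hp : IsUnit p)
    (hpm : p = m * v) (hmp : m = p * w) : w * v = 1 :=
  hp.mul_eq_left.mp (by rw [← mul_assoc, ← hmp, ← hpm])

theorem sigma0_symmetry_of_scattering_data_general (n : ℕ)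
    (Sa : Set ℂ) (hSneg : ∀ lam : ℂ, lam ∈ Sa ↔ -lam ∈ Sa)
    (a abar : Matrix (Fin n ⊕ Fin n) (Fin n ⊕ Fin n) ℂ)
    (mp mm : ℝ → ℂ → Matrix (Fin n ⊕ Fin n) (Fin n ⊕ Fin n) ℂ)
    (V : ℂ → Matrix (Fin n ⊕ Fin n) (Fin n ⊕ Fin n) ℂ)
    (hmpU : ∀ x : ℝ, ∀ lam ∈ Sa, IsUnit (mp x lam))
    (hjump : ∀ x : ℝ, ∀ lam ∈ Sa,
      mp x lam = mm x lam * (Emat a abar x lam)⁻¹ * V lam * Emat a abar x lam)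
    (hsym1 : ∀ x : ℝ, ∀ lam ∈ Sa, sigma0 (mp x (-lam)) = mm x lam)
    (hsym2 : ∀ x : ℝ, ∀ lam ∈ Sa, sigma0 (mm x (-lam)) = mp x lam) :
    ∀ lam ∈ Sa, sigma0 (V (-lam)) * V lam = 1 := by
  intro lam hlam
  have jump_at_zero : ∀ mu ∈ Sa, mp 0 mu = mm 0 mu * V mu := fun mu hmu => by
    simpa using hjump 0 mu hmu
  have hmm : mm 0 lam = mp 0 lam * sigma0 (V (-lam)) := by
    rw [← hsym1 0 lam hlam, ← hsym2 0 lam hlam, jump_at_zero (-lam) ((hSneg lam).mp hlam),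
      sigma0_mul]
  exact mul_eq_one_of_eq_mul_of_eq_mul (hmpU 0 lam hlam) (jump_at_zero lam hlam) hmm

theorem sigma0_symmetry_of_scattering_data (n : ℕ) (hn : 1 ≤ n)
    (Sa : Set ℂ) (hS0 : (0 : ℂ) ∉ Sa) (hSneg : ∀ lam : ℂ, lam ∈ Sa ↔ -lam ∈ Sa)
    (a abar : Matrix (Fin n ⊕ Fin n) (Fin n ⊕ Fin n) ℂ)
    (ha : Dmat n * a * Dmat n = -a) (habar : Dmat n * abar * Dmat n = -abar)
    (mp mm : ℝ → ℂ → Matrix (Fin n ⊕ Fin n) (Fin n ⊕ Fin n) ℂ)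
    (V : ℂ → Matrix (Fin n ⊕ Fin n) (Fin n ⊕ Fin n) ℂ)
    (hmpU : ∀ x : ℝ, ∀ lam ∈ Sa, IsUnit (mp x lam))
    (hmmU : ∀ x : ℝ, ∀ lam ∈ Sa, IsUnit (mm x lam))
    (hjump : ∀ x : ℝ, ∀ lam ∈ Sa,
      mp x lam = mm x lam * (Emat a abar x lam)⁻¹ * V lam * Emat a abar x lam)
    (hsym1 : ∀ x : ℝ, ∀ lam ∈ Sa, sigma0 (mp x (-lam)) = mm x lam)
    (hsym2 : ∀ x : ℝ, ∀ lam ∈ Sa, sigma0 (mm x (-lam)) = mp x lam) :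
    ∀ lam ∈ Sa, sigma0 (V (-lam)) * V lam = 1 :=
  sigma0_symmetry_of_scattering_data_general n Sa hSneg a abar mp mm V hmpU hjump hsym1 hsym2

end
end
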